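/- arXiv:2402.08194 — 3 statements merged into one kernel-verified Lean document; each statement's English description precedes it below -/
import Mathlib

section
/- Fix positive integers N, K, T, k, unitaries W_0, W_1, …, W_T on ℂ^K ⊗ ℂ^{k·N}, a unit vector ψ ∈ ℂ^K ⊗ ℂ^{k·N}, and an orthogonal projection Π on ℂ^K ⊗ ℂ^{k·N}. For a k-tuple of unitaries U = (U_1,…,U_k) with each U_i ∈ U(N), let D(U) denote the k·N × k·N block-diagonal matrix with diagonal blocks U_1,…,U_k, and define f(U) = ‖Π · W_T (I_K ⊗ D(U)) W_{T−1} (I_K ⊗ D(U)) ⋯ W_1 (I_K ⊗ D(U)) W_0 · ψ‖², i.e. the acceptance probability of a quantum algorithm making T queries to the indexed family (U_1,…,U_k). Then for all k-tuples of unitaries U = (U_1,…,U_k) and V = (V_1,…,V_k), |f(U) − f(V)| ≤ 2T · sqrt(Σ_{i=1}^k ‖U_i − V_i‖_F²). -/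
open Matrix Kronecker
open scoped Matrix.Norms.L2Operator

/-- The Frobenius norm `‖M‖_F = sqrt (∑_{i,j} |M i j|²)` of a complex matrix. -/
noncomputable def frobNorm {m n : Type*} [Fintype m] [Fintype n]
    (M : Matrix m n ℂ) : ℝ :=
  Real.sqrt (∑ i, ∑ j, ‖M i j‖ ^ 2)

/-- `circuitProd W Q t = W_t · Q · W_{t−1} · Q ⋯ W_1 · Q · W_0`: the total unitary of a
`t`-query quantum algorithm interleaving the fixed unitaries `W_i` with the query `Q`. -/
noncomputable def circuitProd {ι : Type*} [Fintype ι]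
    (W : ℕ → Matrix ι ι ℂ) (Q : Matrix ι ι ℂ) : ℕ → Matrix ι ι ℂ
  | 0 => W 0
  | t + 1 => W (t + 1) * Q * circuitProd W Q t

/-- The euclidean-space incarnation of a vector `ι → ℂ`. -/
noncomputable def en {ι : Type*} [Fintype ι] (v : ι → ℂ) : EuclideanSpace ℂ ι :=
  (EuclideanSpace.equiv ι ℂ).symm v

theorem en_norm {ι : Type*} [Fintype ι] (v : ι → ℂ) :
    ‖en v‖ = Real.sqrt (∑ p, ‖v p‖ ^ 2) := by
  simp [en, EuclideanSpace.norm_eq]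

theorem en_sub {ι : Type*} [Fintype ι] (v w : ι → ℂ) : en (v - w) = en v - en w := rfl

theorem en_add {ι : Type*} [Fintype ι] (v w : ι → ℂ) : en (v + w) = en v + en w := rfl

theorem en_zero {ι : Type*} [Fintype ι] : en (0 : ι → ℂ) = 0 := rfl

theorem en_mulVec_le {ι : Type*} [Fintype ι] [DecidableEq ι] (A : Matrix ι ι ℂ)
    (v : ι → ℂ) : ‖en (A *ᵥ v)‖ ≤ ‖A‖ * ‖en v‖ :=
  Matrix.l2_opNorm_mulVec A (en v)

theorem unitary_opNorm_le_one {ι : Type*} [Fintype ι] [DecidableEq ι] [Nonempty ι]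
    (M : Matrix ι ι ℂ) (h : M ∈ Matrix.unitaryGroup ι ℂ) : ‖M‖ ≤ 1 := by
  have := CStarRing.norm_coe_unitary (⟨M, h⟩ : unitary (Matrix ι ι ℂ))
  simp at this
  exact le_of_eq this

theorem proj_opNorm_le_one {ι : Type*} [Fintype ι] [DecidableEq ι]
    (P : Matrix ι ι ℂ) (h1 : P.IsHermitian) (h2 : P * P = P) : ‖P‖ ≤ 1 := by
  have key : ‖P‖ * ‖P‖ = ‖P‖ := by
    conv_rhs => rw [← h2]
    rw [← Matrix.l2_opNorm_conjTranspose_mul_self P, h1.eq]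
  nlinarith [norm_nonneg P]

theorem kron_one_conjT {m n : Type*} [Fintype m] [Fintype n] [DecidableEq m]
    (A : Matrix n n ℂ) :
    ((1 : Matrix m m ℂ) ⊗ₖ A)ᴴ = 1 ⊗ₖ Aᴴ := by
  ext ⟨a,p⟩ ⟨b,q⟩
  by_cases h : a = b <;>
    simp [conjTranspose_apply, kroneckerMap_apply, one_apply, h, eq_comm]

theorem kron_one_sub {m n : Type*} [Fintype m] [Fintype n] [DecidableEq m]
    (A B : Matrix n n ℂ) :
    (1 : Matrix m m ℂ) ⊗ₖ (A - B) = 1 ⊗ₖ A - 1 ⊗ₖ B := by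
  ext ⟨a,p⟩ ⟨b,q⟩
  simp [kroneckerMap_apply, Matrix.sub_apply, mul_sub]

theorem kron_one_blockDiag_unitary {K N k : ℕ} (U : Fin k → Matrix (Fin N) (Fin N) ℂ)
    (hU : ∀ i, U i ∈ Matrix.unitaryGroup (Fin N) ℂ) :
    (1 : Matrix (Fin K) (Fin K) ℂ) ⊗ₖ Matrix.blockDiagonal U ∈
      Matrix.unitaryGroup (Fin K × (Fin N × Fin k)) ℂ := by
  rw [Matrix.mem_unitaryGroup_iff']
  show ((1 : Matrix (Fin K) (Fin K) ℂ) ⊗ₖ Matrix.blockDiagonal U)ᴴ * _ = 1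
  rw [kron_one_conjT, Matrix.blockDiagonal_conjTranspose, ← Matrix.mul_kronecker_mul,
    ← Matrix.blockDiagonal_mul, one_mul]
  have : (fun i => (U i)ᴴ * U i) = fun _ => (1 : Matrix (Fin N) (Fin N) ℂ) := by
    funext i
    simpa [Matrix.star_eq_conjTranspose] using Matrix.mem_unitaryGroup_iff'.mp (hU i)
  rw [this]
  rw [show (blockDiagonal fun _ : Fin k => (1 : Matrix (Fin N) (Fin N) ℂ)) = 1 from
    Matrix.blockDiagonal_one, Matrix.one_kronecker_one]

theorem kron_blockDiag_mulVec_entry {K N k : ℕ} (B : Fin k → Matrix (Fin N) (Fin N) ℂ)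
    (x : Fin K × (Fin N × Fin k) → ℂ) (a : Fin K) (p : Fin N) (i : Fin k) :
    (((1 : Matrix (Fin K) (Fin K) ℂ) ⊗ₖ Matrix.blockDiagonal B) *ᵥ x) (a, (p, i))
      = ∑ q, B i p q * x (a, (q, i)) := by
  simp [mulVec, dotProduct, Fintype.sum_prod_type, kroneckerMap_apply, blockDiagonal_apply,
    one_apply, ite_mul, zero_mul, mul_ite, mul_zero, Finset.sum_ite_eq, Finset.sum_ite_eq']

theorem kron_blockDiag_mulVec_bound {K N k : ℕ} (B : Fin k → Matrix (Fin N) (Fin N) ℂ)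
    (x : Fin K × (Fin N × Fin k) → ℂ) :
    ∑ p, ‖(((1 : Matrix (Fin K) (Fin K) ℂ) ⊗ₖ Matrix.blockDiagonal B) *ᵥ x) p‖ ^ 2
      ≤ (∑ i, ∑ p, ∑ q, ‖B i p q‖ ^ 2) * ∑ p, ‖x p‖ ^ 2 := by
  set S : ℝ := ∑ i, ∑ p, ∑ q, ‖B i p q‖ ^ 2 with hS
  have hSnn : ∀ i, (0:ℝ) ≤ ∑ p, ∑ q, ‖B i p q‖ ^ 2 := fun i =>
    Finset.sum_nonneg fun _ _ => Finset.sum_nonneg fun _ _ => sq_nonneg _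
  calc ∑ p, ‖(((1 : Matrix (Fin K) (Fin K) ℂ) ⊗ₖ Matrix.blockDiagonal B) *ᵥ x) p‖ ^ 2
      = ∑ a : Fin K, ∑ i : Fin k, ∑ p : Fin N, ‖∑ q, B i p q * x (a, (q, i))‖ ^ 2 := by
        rw [Fintype.sum_prod_type]
        refine Finset.sum_congr rfl fun a _ => ?_
        rw [Fintype.sum_prod_type, Finset.sum_comm]
        exact Finset.sum_congr rfl fun i _ => Finset.sum_congr rfl fun p _ => by
          rw [kron_blockDiag_mulVec_entry]
    _ ≤ ∑ a : Fin K, ∑ i : Fin k, ∑ p : Fin N,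
          (∑ q, ‖B i p q‖ ^ 2) * (∑ q, ‖x (a, (q, i))‖ ^ 2) := by
        refine Finset.sum_le_sum fun a _ => Finset.sum_le_sum fun i _ =>
          Finset.sum_le_sum fun p _ => ?_
        calc ‖∑ q, B i p q * x (a, (q, i))‖ ^ 2
            ≤ (∑ q, ‖B i p q‖ * ‖x (a, (q, i))‖) ^ 2 := by
              refine pow_le_pow_left₀ (norm_nonneg _) ?_ 2
              exact (norm_sum_le _ _).trans (le_of_eq (Finset.sum_congr rfl fun q _ =>
                norm_mul _ _))
          _ ≤ (∑ q, ‖B i p q‖ ^ 2) * (∑ q, ‖x (a, (q, i))‖ ^ 2) :=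
              Finset.sum_mul_sq_le_sq_mul_sq _ _ _
    _ = ∑ a : Fin K, ∑ i : Fin k, (∑ p, ∑ q, ‖B i p q‖ ^ 2) * (∑ q, ‖x (a, (q, i))‖ ^ 2) := by
        refine Finset.sum_congr rfl fun a _ => Finset.sum_congr rfl fun i _ => ?_
        rw [Finset.sum_mul]
    _ ≤ ∑ a : Fin K, ∑ i : Fin k, S * (∑ q, ‖x (a, (q, i))‖ ^ 2) := by
        refine Finset.sum_le_sum fun a _ => Finset.sum_le_sum fun i _ => ?_
        refine mul_le_mul_of_nonneg_right ?_
          (Finset.sum_nonneg fun _ _ => sq_nonneg _)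
        exact Finset.single_le_sum (fun j _ => hSnn j) (Finset.mem_univ i)
    _ = S * ∑ p, ‖x p‖ ^ 2 := by
        rw [Fintype.sum_prod_type, Finset.mul_sum]
        refine Finset.sum_congr rfl fun a _ => ?_
        rw [← Finset.mul_sum, Fintype.sum_prod_type]
        congr 1
        exact Finset.sum_comm ..

/-- Fix positive `N, K, T, k`, unitaries `W_0, …, W_T` on `ℂ^K ⊗ ℂ^{k·N}`,
a unit vector `ψ`, and an orthogonal projection `Π`. For a `k`-tuple `U = (U_1, …, U_k)` of
unitaries in `U(N)`, let `D U` be the block-diagonal matrix with blocks `U_1, …, U_k` and let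
`f U = ‖Π · W_T (I_K ⊗ D U) ⋯ W_1 (I_K ⊗ D U) W_0 · ψ‖²` be the acceptance probability of
the `T`-query algorithm querying the indexed family `(U_1, …, U_k)`. Then for all `k`-tuples
of unitaries `U, V`, `|f U − f V| ≤ 2T · sqrt (∑_i ‖U_i − V_i‖_F²)`. -/
theorem stmt_2 (N K T k : ℕ) (hN : 0 < N) (hK : 0 < K) (hT : 0 < T) (hk : 0 < k)
    (W : ℕ → Matrix (Fin K × (Fin N × Fin k)) (Fin K × (Fin N × Fin k)) ℂ)
    (hW : ∀ i ≤ T, W i ∈ Matrix.unitaryGroup (Fin K × (Fin N × Fin k)) ℂ)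
    (ψ : Fin K × (Fin N × Fin k) → ℂ) (hψ : ∑ p, ‖ψ p‖ ^ 2 = 1)
    (Proj : Matrix (Fin K × (Fin N × Fin k)) (Fin K × (Fin N × Fin k)) ℂ)
    (hProj₁ : Proj.IsHermitian) (hProj₂ : Proj * Proj = Proj)
    (f : (Fin k → Matrix (Fin N) (Fin N) ℂ) → ℝ)
    (hf : ∀ U, f U =
      ∑ p, ‖(Proj *ᵥ (circuitProd W
        ((1 : Matrix (Fin K) (Fin K) ℂ) ⊗ₖ Matrix.blockDiagonal U) T *ᵥ ψ)) p‖ ^ 2)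
    (U V : Fin k → Matrix (Fin N) (Fin N) ℂ)
    (hU : ∀ i, U i ∈ Matrix.unitaryGroup (Fin N) ℂ)
    (hV : ∀ i, V i ∈ Matrix.unitaryGroup (Fin N) ℂ) :
    |f U - f V| ≤ 2 * T * Real.sqrt (∑ i, frobNorm (U i - V i) ^ 2) := by
  haveI : Nonempty (Fin K) := ⟨⟨0, hK⟩⟩
  haveI : Nonempty (Fin N) := ⟨⟨0, hN⟩⟩
  haveI : Nonempty (Fin k) := ⟨⟨0, hk⟩⟩
  set QU : Matrix (Fin K × (Fin N × Fin k)) (Fin K × (Fin N × Fin k)) ℂ :=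
    (1 : Matrix (Fin K) (Fin K) ℂ) ⊗ₖ Matrix.blockDiagonal U with hQU
  set QV : Matrix (Fin K × (Fin N × Fin k)) (Fin K × (Fin N × Fin k)) ℂ :=
    (1 : Matrix (Fin K) (Fin K) ℂ) ⊗ₖ Matrix.blockDiagonal V with hQV
  set S : ℝ := ∑ i, ∑ p, ∑ q, ‖(U i - V i) p q‖ ^ 2 with hS
  have hSnn : 0 ≤ S := Finset.sum_nonneg fun _ _ => Finset.sum_nonneg fun _ _ =>
    Finset.sum_nonneg fun _ _ => sq_nonneg _
  set δ : ℝ := Real.sqrt S with hδ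
  have hδnn : 0 ≤ δ := Real.sqrt_nonneg _
  -- the target's sqrt equals δ
  have htarget : Real.sqrt (∑ i, frobNorm (U i - V i) ^ 2) = δ := by
    rw [hδ, hS]
    congr 1
    refine Finset.sum_congr rfl fun i _ => ?_
    exact Real.sq_sqrt (Finset.sum_nonneg fun _ _ => Finset.sum_nonneg fun _ _ => sq_nonneg _)
  -- norm of ψ
  have hψn : ‖en ψ‖ = 1 := by rw [en_norm, hψ, Real.sqrt_one]
  -- op-norm bounds
  have hQUn : ‖QU‖ ≤ 1 := unitary_opNorm_le_one _ (kron_one_blockDiag_unitary U hU)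
  have hQVn : ‖QV‖ ≤ 1 := unitary_opNorm_le_one _ (kron_one_blockDiag_unitary V hV)
  have hPn : ‖Proj‖ ≤ 1 := proj_opNorm_le_one Proj hProj₁ hProj₂
  -- difference bound for the queries
  have hdiff : ∀ x : Fin K × (Fin N × Fin k) → ℂ,
      ‖en ((QU - QV) *ᵥ x)‖ ≤ δ * ‖en x‖ := by
    intro x
    have h1 : QU - QV = (1 : Matrix (Fin K) (Fin K) ℂ) ⊗ₖ
        Matrix.blockDiagonal (fun i => U i - V i) := by
      have h0 : (fun i => U i - V i) = U - V := rfl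
      rw [hQU, hQV, h0, Matrix.blockDiagonal_sub, kron_one_sub]
    rw [h1, en_norm, en_norm]
    calc Real.sqrt (∑ p, ‖(((1 : Matrix (Fin K) (Fin K) ℂ) ⊗ₖ
            Matrix.blockDiagonal (fun i => U i - V i)) *ᵥ x) p‖ ^ 2)
        ≤ Real.sqrt (S * ∑ p, ‖x p‖ ^ 2) :=
          Real.sqrt_le_sqrt (kron_blockDiag_mulVec_bound _ x)
      _ = δ * Real.sqrt (∑ p, ‖x p‖ ^ 2) := Real.sqrt_mul hSnn _
  -- norm bound on circuit states
  have hnorm : ∀ (Q : Matrix (Fin K × (Fin N × Fin k)) (Fin K × (Fin N × Fin k)) ℂ),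
      ‖Q‖ ≤ 1 → ∀ t, t ≤ T → ‖en (circuitProd W Q t *ᵥ ψ)‖ ≤ 1 := by
    intro Q hQ t
    induction t with
    | zero =>
      intro ht
      calc ‖en (circuitProd W Q 0 *ᵥ ψ)‖ ≤ ‖W 0‖ * ‖en ψ‖ := en_mulVec_le _ _
        _ ≤ 1 * 1 := mul_le_mul (unitary_opNorm_le_one _ (hW 0 (Nat.zero_le _)))
            (le_of_eq hψn) (norm_nonneg _) zero_le_one
        _ = 1 := by ring
    | succ t ih =>
      intro ht
      have ht' : t ≤ T := Nat.le_of_succ_le ht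
      have : circuitProd W Q (t + 1) *ᵥ ψ
          = W (t + 1) *ᵥ (Q *ᵥ (circuitProd W Q t *ᵥ ψ)) := by
        show (W (t + 1) * Q * circuitProd W Q t) *ᵥ ψ = _
        rw [Matrix.mulVec_mulVec, Matrix.mulVec_mulVec]
      rw [this]
      calc ‖en (W (t + 1) *ᵥ (Q *ᵥ (circuitProd W Q t *ᵥ ψ)))‖
          ≤ ‖W (t + 1)‖ * ‖en (Q *ᵥ (circuitProd W Q t *ᵥ ψ))‖ := en_mulVec_le _ _
        _ ≤ 1 * (‖Q‖ * ‖en (circuitProd W Q t *ᵥ ψ)‖) :=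
            mul_le_mul (unitary_opNorm_le_one _ (hW _ ht)) (en_mulVec_le _ _)
              (norm_nonneg _) zero_le_one
        _ ≤ 1 * (1 * 1) := by
            refine mul_le_mul_of_nonneg_left ?_ zero_le_one
            exact mul_le_mul hQ (ih ht') (norm_nonneg _) zero_le_one
        _ = 1 := by ring
  -- hybrid argument
  have hhyb : ∀ t, t ≤ T →
      ‖en (circuitProd W QU t *ᵥ ψ - circuitProd W QV t *ᵥ ψ)‖ ≤ t * δ := by
    intro t
    induction t with
    | zero =>
      intro _
      simp [circuitProd, sub_self, en_zero]
    | succ t ih =>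
      intro ht
      have ht' : t ≤ T := Nat.le_of_succ_le ht
      set a := circuitProd W QU t *ᵥ ψ with ha
      set b := circuitProd W QV t *ᵥ ψ with hb
      have hxa : circuitProd W QU (t + 1) *ᵥ ψ = W (t + 1) *ᵥ (QU *ᵥ a) := by
        show (W (t + 1) * QU * circuitProd W QU t) *ᵥ ψ = _
        rw [Matrix.mulVec_mulVec, Matrix.mulVec_mulVec]
      have hxb : circuitProd W QV (t + 1) *ᵥ ψ = W (t + 1) *ᵥ (QV *ᵥ b) := by
        show (W (t + 1) * QV * circuitProd W QV t) *ᵥ ψ = _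
        rw [Matrix.mulVec_mulVec, Matrix.mulVec_mulVec]
      have hsplit : QU *ᵥ a - QV *ᵥ b = QU *ᵥ (a - b) + (QU - QV) *ᵥ b := by
        rw [Matrix.mulVec_sub, Matrix.sub_mulVec]
        abel
      have hWsub : W (t + 1) *ᵥ (QU *ᵥ a) - W (t + 1) *ᵥ (QV *ᵥ b)
          = W (t + 1) *ᵥ (QU *ᵥ a - QV *ᵥ b) := by
        rw [Matrix.mulVec_sub]
      calc ‖en (circuitProd W QU (t+1) *ᵥ ψ - circuitProd W QV (t+1) *ᵥ ψ)‖
          = ‖en (W (t + 1) *ᵥ (QU *ᵥ a - QV *ᵥ b))‖ := by rw [hxa, hxb, hWsub]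
        _ ≤ ‖W (t + 1)‖ * ‖en (QU *ᵥ a - QV *ᵥ b)‖ := en_mulVec_le _ _
        _ ≤ 1 * ‖en (QU *ᵥ a - QV *ᵥ b)‖ :=
            mul_le_mul_of_nonneg_right (unitary_opNorm_le_one _ (hW _ ht)) (norm_nonneg _)
        _ = ‖en (QU *ᵥ (a - b)) + en ((QU - QV) *ᵥ b)‖ := by
            rw [one_mul, hsplit, en_add]
        _ ≤ ‖en (QU *ᵥ (a - b))‖ + ‖en ((QU - QV) *ᵥ b)‖ := norm_add_le _ _
        _ ≤ ‖QU‖ * ‖en (a - b)‖ + δ * ‖en b‖ :=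
            add_le_add (en_mulVec_le _ _) (hdiff b)
        _ ≤ 1 * (t * δ) + δ * 1 := by
            refine add_le_add ?_ ?_
            · calc ‖QU‖ * ‖en (a - b)‖ ≤ 1 * ‖en (a - b)‖ :=
                  mul_le_mul_of_nonneg_right hQUn (norm_nonneg _)
                _ ≤ 1 * (t * δ) := by
                  rw [one_mul, one_mul]
                  exact ih ht'
            · exact mul_le_mul_of_nonneg_left (hnorm QV hQVn t ht') hδnn
        _ = (t + 1 : ℕ) * δ := by push_cast; ring
  -- conclude
  set xT := circuitProd W QU T *ᵥ ψ with hxT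
  set yT := circuitProd W QV T *ᵥ ψ with hyT
  set A := ‖en (Proj *ᵥ xT)‖ with hA
  set Bb := ‖en (Proj *ᵥ yT)‖ with hB
  have hfU : f U = A ^ 2 := by
    rw [hf, hA, en_norm, Real.sq_sqrt (Finset.sum_nonneg fun _ _ => sq_nonneg _)]
  have hfV : f V = Bb ^ 2 := by
    rw [hf, hB, en_norm, Real.sq_sqrt (Finset.sum_nonneg fun _ _ => sq_nonneg _)]
  have hA1 : A ≤ 1 := by
    calc A ≤ ‖Proj‖ * ‖en xT‖ := en_mulVec_le _ _
      _ ≤ 1 * 1 := mul_le_mul hPn (hnorm QU hQUn T le_rfl) (norm_nonneg _) zero_le_one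
      _ = 1 := by ring
  have hB1 : Bb ≤ 1 := by
    calc Bb ≤ ‖Proj‖ * ‖en yT‖ := en_mulVec_le _ _
      _ ≤ 1 * 1 := mul_le_mul hPn (hnorm QV hQVn T le_rfl) (norm_nonneg _) zero_le_one
      _ = 1 := by ring
  have hABdiff : |A - Bb| ≤ T * δ := by
    have h1 : |A - Bb| ≤ ‖en (Proj *ᵥ xT) - en (Proj *ᵥ yT)‖ := abs_norm_sub_norm_le _ _
    have h2 : en (Proj *ᵥ xT) - en (Proj *ᵥ yT) = en (Proj *ᵥ (xT - yT)) := by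
      rw [← en_sub, Matrix.mulVec_sub]
    calc |A - Bb| ≤ ‖en (Proj *ᵥ (xT - yT))‖ := by rw [← h2]; exact h1
      _ ≤ ‖Proj‖ * ‖en (xT - yT)‖ := en_mulVec_le _ _
      _ ≤ 1 * (T * δ) := mul_le_mul hPn (hhyb T le_rfl) (norm_nonneg _) zero_le_one
      _ = T * δ := by ring
  rw [hfU, hfV, htarget]
  have hfactor : A ^ 2 - Bb ^ 2 = (A - Bb) * (A + Bb) := by ring
  calc |A ^ 2 - Bb ^ 2| = |A - Bb| * |A + Bb| := by rw [hfactor, abs_mul]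
    _ ≤ (T * δ) * 2 := by
      have hAnn : 0 ≤ A := norm_nonneg _
      have hBnn : 0 ≤ Bb := norm_nonneg _
      refine mul_le_mul hABdiff ?_ (abs_nonneg _) ?_
      · rw [abs_of_nonneg (add_nonneg hAnn hBnn)]
        linarith
      · exact mul_nonneg (Nat.cast_nonneg _) hδnn
    _ = 2 * T * δ := by ring
end

section
/- Let (Ω, μ) be a probability space, let f : Ω → ℝ be measurable with 0 ≤ f(ω) ≤ 1 for all ω ∈ Ω, and let δ > 0 and 0 < ε ≤ 1. Suppose that (μ × μ)({(u, u') ∈ Ω × Ω : |f(u) − f(u')| ≥ δ}) ≤ ε². Then μ({u ∈ Ω : |f(u) − ∫ f dμ| > δ + ε}) ≤ ε. -/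
/-!
If `|f u - ∫ f dμ| > δ + ε`, then `|f u - f x| ≥ δ` on a set of `x` of measure at least `ε`:
otherwise, as `|f u - f x| ≤ 1`, averaging over `x` would give `|f u - ∫ f dμ| ≤ δ + ε`.
Markov's inequality for the slice measures `u ↦ μ {x | δ ≤ |f u - f x|}`, whose integral is
`(μ × μ) {δ ≤ |f u - f u'|} ≤ ε²`, then bounds the measure of such `u` by `ε`.
-/

open MeasureTheory

theorem abs_integral_le_add_measureReal_setOf_le_abs {Ω : Type*} [MeasurableSpace Ω]
    {μ : Measure Ω} [IsProbabilityMeasure μ] {g : Ω → ℝ} (hg : Measurable g)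
    (hg1 : ∀ x, |g x| ≤ 1) {δ : ℝ} (hδ : 0 ≤ δ) :
    |∫ x, g x ∂μ| ≤ δ + μ.real {x | δ ≤ |g x|} := by
  set S := {x | δ ≤ |g x|}
  have hS : MeasurableSet S := measurableSet_le measurable_const hg.abs
  have hg_le : ∀ x, |g x| ≤ δ + S.indicator (fun _ => (1 : ℝ)) x := by
    intro x
    by_cases hx : x ∈ S
    · rw [Set.indicator_of_mem hx]
      linarith [hg1 x]
    · simpa [Set.indicator_of_notMem hx] using (not_le.mp hx).le
  have hg_int : Integrable g μ :=
    (integrable_const 1).mono' hg.aestronglyMeasurable (ae_of_all _ hg1)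
  have hS_int : Integrable (S.indicator (fun _ => (1 : ℝ))) μ := (integrable_const 1).indicator hS
  calc |∫ x, g x ∂μ| ≤ ∫ x, |g x| ∂μ := abs_integral_le_integral_abs
    _ ≤ ∫ x, (δ + S.indicator (fun _ => (1 : ℝ)) x) ∂μ :=
        integral_mono hg_int.abs ((integrable_const δ).add hS_int) hg_le
    _ = δ + μ.real S := by
        rw [integral_add (integrable_const δ) hS_int, integral_const, probReal_univ, one_smul,
          integral_indicator_const _ hS, smul_eq_mul, mul_one]

theorem lt_measureReal_setOf_le_abs_sub_of_lt_abs_sub_integral {Ω : Type*} [MeasurableSpace Ω]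
    {μ : Measure Ω} [IsProbabilityMeasure μ] {f : Ω → ℝ} (hf : Measurable f)
    (hf0 : ∀ ω, 0 ≤ f ω) (hf1 : ∀ ω, f ω ≤ 1) {δ ε : ℝ} (hδ : 0 ≤ δ) {u : Ω}
    (hu : δ + ε < |f u - ∫ x, f x ∂μ|) :
    ε < μ.real {x | δ ≤ |f u - f x|} := by
  have hf_int : Integrable f μ := (integrable_const 1).mono' hf.aestronglyMeasurable
    (ae_of_all _ fun x => (Real.norm_of_nonneg (hf0 x)).trans_le (hf1 x))
  have h_mean : ∫ x, (f u - f x) ∂μ = f u - ∫ x, f x ∂μ := by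
    rw [integral_sub (integrable_const _) hf_int, integral_const, probReal_univ, one_smul]
  have h_bound := abs_integral_le_add_measureReal_setOf_le_abs (μ := μ)
    (g := fun x => f u - f x) (measurable_const.sub hf)
    (fun x => abs_sub_le_of_nonneg_of_le (hf0 u) (hf1 u) (hf0 x) (hf1 x)) hδ
  rw [h_mean] at h_bound
  linarith

theorem mul_measure_setOf_le_measure_slice_le_prod {α β : Type*} [MeasurableSpace α]
    [MeasurableSpace β] {μ : Measure α} {ν : Measure β} [SFinite ν] {s : Set (α × β)}
    (hs : MeasurableSet s) (c : ENNReal) :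
    c * μ {a | c ≤ ν (Prod.mk a ⁻¹' s)} ≤ μ.prod ν s := by
  rw [Measure.prod_apply hs]
  exact mul_meas_ge_le_lintegral (measurable_measure_prodMk_left hs) c

theorem stmt_5_general {Ω : Type*} [MeasurableSpace Ω] (μ : Measure Ω) [IsProbabilityMeasure μ]
    (f : Ω → ℝ) (hf : Measurable f)
    (hf0 : ∀ ω, 0 ≤ f ω) (hf1 : ∀ ω, f ω ≤ 1)
    (δ ε : ℝ) (hδ : 0 < δ) (hε : 0 < ε)
    (hpair : (μ.prod μ) {p : Ω × Ω | δ ≤ |f p.1 - f p.2|} ≤ ENNReal.ofReal (ε ^ 2)) :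
    μ {u | δ + ε < |f u - ∫ x, f x ∂μ|} ≤ ENNReal.ofReal ε := by
  set B := {p : Ω × Ω | δ ≤ |f p.1 - f p.2|}
  have hB : MeasurableSet B :=
    measurableSet_le measurable_const ((hf.comp measurable_fst).sub (hf.comp measurable_snd)).abs
  have h_slice : {u | δ + ε < |f u - ∫ x, f x ∂μ|} ⊆
      {u | ENNReal.ofReal ε ≤ μ (Prod.mk u ⁻¹' B)} := fun _ hu =>
    ENNReal.ofReal_le_of_le_toReal
      (lt_measureReal_setOf_le_abs_sub_of_lt_abs_sub_integral hf hf0 hf1 hδ.le hu).le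
  have h_markov : ENNReal.ofReal ε * μ {u | δ + ε < |f u - ∫ x, f x ∂μ|} ≤
      ENNReal.ofReal ε * ENNReal.ofReal ε :=
    calc _ ≤ ENNReal.ofReal ε * μ {u | ENNReal.ofReal ε ≤ μ (Prod.mk u ⁻¹' B)} := by gcongr
      _ ≤ μ.prod μ B := mul_measure_setOf_le_measure_slice_le_prod hB _
      _ ≤ _ := by rwa [sq, ENNReal.ofReal_mul hε.le] at hpair
  exact (ENNReal.mul_le_mul_iff_right (by simpa using hε) ENNReal.ofReal_ne_top).mp h_markov

/-- Let `(Ω, μ)` be a probability space, `f : Ω → ℝ` measurable with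
`0 ≤ f ≤ 1`, `δ > 0`, `0 < ε ≤ 1`. If `(μ × μ) {(u,u') : |f u − f u'| ≥ δ} ≤ ε²`, then
`μ {u : |f u − ∫ f dμ| > δ + ε} ≤ ε`. -/
theorem stmt_5 {Ω : Type*} [MeasurableSpace Ω] (μ : Measure Ω) [IsProbabilityMeasure μ]
    (f : Ω → ℝ) (hf : Measurable f)
    (hf0 : ∀ ω, 0 ≤ f ω) (hf1 : ∀ ω, f ω ≤ 1)
    (δ ε : ℝ) (hδ : 0 < δ) (hε : 0 < ε) (hε1 : ε ≤ 1)
    (hpair : (μ.prod μ) {p : Ω × Ω | δ ≤ |f p.1 - f p.2|} ≤ ENNReal.ofReal (ε ^ 2)) :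
    μ {u | δ + ε < |f u - ∫ x, f x ∂μ|} ≤ ENNReal.ofReal ε :=
  stmt_5_general μ f hf hf0 hf1 δ ε hδ hε hpair
end

section
/- Let S be a finite set with |S| ≥ 3 and let P be a binary relation on S. Define GoodSigner = {x ∈ S : P(x, y) holds for every y ∈ S with y ≠ x}, and Stingy = {x ∈ S : the number of y ∈ S with y ≠ x and P(y, x) is at most |S|/2}. Then |GoodSigner ∩ Stingy| ≤ (9/10)·|S|. -/
/-- Let `S` be a finite set with `|S| ≥ 3` and `P` a binary relation on `S`.
With `GoodSigner = {x ∈ S : P x y for every y ∈ S, y ≠ x}` and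
`Stingy = {x ∈ S : #{y ∈ S : y ≠ x ∧ P y x} ≤ |S|/2}`, we have
`|GoodSigner ∩ Stingy| ≤ (9/10)·|S|`. -/
theorem stmt_6 {α : Type*} [DecidableEq α] (S : Finset α) (hS : 3 ≤ S.card)
    (P : α → α → Prop) [DecidableRel P] :
    (((S.filter fun x => ∀ y ∈ S, y ≠ x → P x y) ∩
        (S.filter fun x =>
          ((S.filter fun y => y ≠ x ∧ P y x).card : ℚ) ≤ (S.card : ℚ) / 2)).card : ℚ)
      ≤ (9 / 10) * S.card := by
  set A := S.filter fun x => ∀ y ∈ S, y ≠ x → P x y with hA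
  set B := S.filter fun x =>
      ((S.filter fun y => y ≠ x ∧ P y x).card : ℚ) ≤ (S.card : ℚ) / 2 with hB
  have hScard : (3 : ℚ) ≤ (S.card : ℚ) := by exact_mod_cast hS
  rcases (A ∩ B).eq_empty_or_nonempty with h | ⟨x, hx⟩
  · rw [h]; simp
  · have hxA : x ∈ A := (Finset.mem_inter.mp hx).1
    have hxB : x ∈ B := (Finset.mem_inter.mp hx).2
    have hxS : x ∈ S := (Finset.mem_filter.mp hxA).1
    have hxStingy := (Finset.mem_filter.mp hxB).2
    have hsub : A.erase x ⊆ S.filter fun y => y ≠ x ∧ P y x := by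
      intro y hy
      have hyx : y ≠ x := Finset.ne_of_mem_erase hy
      have hyA : y ∈ A := Finset.mem_of_mem_erase hy
      have hyS : y ∈ S := (Finset.mem_filter.mp hyA).1
      have hgood := (Finset.mem_filter.mp hyA).2
      exact Finset.mem_filter.mpr ⟨hyS, hyx, hgood x hxS (Ne.symm hyx)⟩
    have h1 : A.card - 1 ≤ (S.filter fun y => y ≠ x ∧ P y x).card := by
      have := Finset.card_le_card hsub
      have := Finset.card_erase_of_mem hxA
      omega
    have h2 : (A.card : ℚ) - 1 ≤ ((S.filter fun y => y ≠ x ∧ P y x).card : ℚ) := by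
      have hApos : 1 ≤ A.card := Finset.card_pos.mpr ⟨x, hxA⟩
      have : (A.card - 1 : ℕ) = A.card - 1 := rfl
      push_cast [Nat.cast_sub hApos] at h1 ⊢
      have := h1
      exact_mod_cast by exact_mod_cast h1
    have h3 : ((A ∩ B).card : ℚ) ≤ (A.card : ℚ) := by
      exact_mod_cast Finset.card_le_card (Finset.inter_subset_left)
    linarith
end
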